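/- arXiv:2411.14284 — 7 statements merged into one kernel-verified Lean document; each statement's English description precedes it below -/
import Mathlib

section
/- For every KAT expression e and every relational interpretation (S, τ, σ), the relational semantics satisfies R⟦e⟧ = { (s,s') : there exists a labeled path π from s to s' whose induced guarded string w_π lies in L(e) }. Consequently, if L(e) = L(f) then R⟦e⟧ = R⟦f⟧ for all interpretations. -/
/-- A guarded string candidate: a list of atoms (sets of tests) and actions. -/
abbrev GList (A T : Type) := List (Set T ⊕ A)

/-- Guarded strings: nonempty alternating sequences starting and ending with an atom. -/
inductive IsGuarded {A T : Type} : GList A T → Prop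
  | single (α : Set T) : IsGuarded [Sum.inl α]
  | cons (α : Set T) (p : A) {l : GList A T} : IsGuarded l →
      IsGuarded (Sum.inl α :: Sum.inr p :: l)

/-- Guarded composition of guarded languages: fuse matching boundary atoms. -/
def gcomp {A T : Type} (L K : Set (GList A T)) : Set (GList A T) :=
  { z | ∃ (w : GList A T) (α : Set T) (x : GList A T),
      w ++ [Sum.inl α] ∈ L ∧ Sum.inl α :: x ∈ K ∧ z = w ++ Sum.inl α :: x }

/-- The language of all length-one guarded strings (all atoms). -/
def atomsLang {A T : Type} : Set (GList A T) := { w | ∃ α : Set T, w = [Sum.inl α] }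

/-- Iterated guarded composition. -/
def gpow {A T : Type} (L : Set (GList A T)) : ℕ → Set (GList A T)
  | 0 => atomsLang
  | n + 1 => gcomp L (gpow L n)

/-- Guarded star. -/
def gstar {A T : Type} (L : Set (GList A T)) : Set (GList A T) := ⋃ n, gpow L n

/-- Boolean (test) expressions over test variables T. -/
inductive BExp (T : Type) where
  | tru : BExp T
  | fls : BExp T
  | var (t : T) : BExp T
  | or (b c : BExp T) : BExp T
  | and (b c : BExp T) : BExp T
  | not (b : BExp T) : BExp T

/-- Satisfaction of a test by an atom (truth assignment). -/
def BExp.holds {T : Type} (α : Set T) : BExp T → Prop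
  | .tru => True
  | .fls => False
  | .var t => t ∈ α
  | .or b c => BExp.holds α b ∨ BExp.holds α c
  | .and b c => BExp.holds α b ∧ BExp.holds α c
  | .not b => ¬ BExp.holds α b

/-- The guarded language of a test. -/
def testLang {A T : Type} (b : BExp T) : Set (GList A T) :=
  { w | ∃ α : Set T, b.holds α ∧ w = [Sum.inl α] }

/-- KAT expressions over actions A and tests T. -/
inductive KExp (A T : Type) where
  | test (b : BExp T) : KExp A T
  | act (p : A) : KExp A T
  | plus (e f : KExp A T) : KExp A T
  | seq (e f : KExp A T) : KExp A T
  | star (e : KExp A T) : KExp A T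

/-- Language semantics of KAT. -/
def lang {A T : Type} : KExp A T → Set (GList A T)
  | .test b => testLang b
  | .act p => { w | ∃ α β : Set T, w = [Sum.inl α, Sum.inr p, Sum.inl β] }
  | .plus e f => lang e ∪ lang f
  | .seq e f => gcomp (lang e) (lang f)
  | .star e => gstar (lang e)

/-- Semantics of a test under a valuation τ on states S. -/
def bsem {T S : Type} (τ : T → Set S) : BExp T → Set S
  | .tru => Set.univ
  | .fls => ∅
  | .var t => τ t
  | .or b c => bsem τ b ∪ bsem τ c
  | .and b c => bsem τ b ∩ bsem τ c
  | .not b => (bsem τ b)ᶜ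

/-- Relational semantics of KAT under an interpretation (S, τ, σ). -/
def rsem {A T S : Type} (τ : T → Set S) (σ : A → S → S → Prop) : KExp A T → S → S → Prop
  | .test b => fun s s' => s = s' ∧ s ∈ bsem τ b
  | .act p => σ p
  | .plus e f => fun s s' => rsem τ σ e s s' ∨ rsem τ σ f s s'
  | .seq e f => fun s s' => ∃ s'', rsem τ σ e s s'' ∧ rsem τ σ f s'' s'
  | .star e => Relation.ReflTransGen (rsem τ σ e)

/-- A relation is a partial function. -/
def Functional {S : Type} (r : S → S → Prop) : Prop :=
  ∀ s s₁ s₂, r s s₁ → r s s₂ → s₁ = s₂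

/-- A KAT expression is deterministic: it maps functional interpretations to functional relations. -/
def DetExp {A T : Type} (e : KExp A T) : Prop :=
  ∀ (S : Type) (τ : T → Set S) (σ : A → S → S → Prop),
    (∀ p, Functional (σ p)) → Functional (rsem τ σ e)

/-- A guarded language is deterministic: no member is a proper prefix of another, and
any two distinct members first differ at an atom. -/
def DetLang {A T : Type} (L : Set (GList A T)) : Prop :=
  ∀ w ∈ L, ∀ x ∈ L, w ≠ x →
    ∃ (l w' x' : GList A T) (α β : Set T), α ≠ β ∧
      w = l ++ Sum.inl α :: w' ∧ x = l ++ Sum.inl β :: x'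

/-- The atom of a state: the set of tests true at it. -/
def atomOf {T S : Type} (τ : T → Set S) (s : S) : Set T := { t | s ∈ τ t }

/-- Labeled paths in an interpretation, together with their induced guarded strings. -/
inductive IsPath {A T S : Type} (τ : T → Set S) (σ : A → S → S → Prop) :
    S → GList A T → S → Prop
  | nil (s : S) : IsPath τ σ s [Sum.inl (atomOf τ s)] s
  | cons {s s' s'' : S} {p : A} {w : GList A T} :
      σ p s s' → IsPath τ σ s' w s'' →
      IsPath τ σ s (Sum.inl (atomOf τ s) :: Sum.inr p :: w) s''

/-- GKAT expressions. -/
inductive GExp (A T : Type) where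
  | assert (b : BExp T) : GExp A T
  | act (p : A) : GExp A T
  | seq (e f : GExp A T) : GExp A T
  | ite (b : BExp T) (e f : GExp A T) : GExp A T
  | whl (b : BExp T) (e : GExp A T) : GExp A T

/-- Language semantics of GKAT. -/
def glang {A T : Type} : GExp A T → Set (GList A T)
  | .assert b => testLang b
  | .act p => { w | ∃ α β : Set T, w = [Sum.inl α, Sum.inr p, Sum.inl β] }
  | .seq e f => gcomp (glang e) (glang f)
  | .ite b e f => gcomp (testLang b) (glang e) ∪ gcomp (testLang b.not) (glang f)
  | .whl b e => gcomp (gstar (gcomp (testLang b) (glang e))) (testLang b.not)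

/-- Output of a deterministic KAT automaton on a state and atom. -/
inductive Out (A Q : Type) where
  | accept : Out A Q
  | reject : Out A Q
  | step (p : A) (q : Q) : Out A Q

/-- Acceptance in a deterministic KAT automaton with transition function δ,
starting from dynamics γ. -/
inductive AccFrom {A T Q : Type} (δ : Q → Set T → Out A Q) :
    (Set T → Out A Q) → GList A T → Prop
  | accept {γ : Set T → Out A Q} {α : Set T} :
      γ α = Out.accept → AccFrom δ γ [Sum.inl α]
  | step {γ : Set T → Out A Q} {α : Set T} {p : A} {q : Q} {w : GList A T} :
      γ α = Out.step p q → AccFrom δ (δ q) w →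
      AccFrom δ γ (Sum.inl α :: Sum.inr p :: w)

/-- Brzozowski derivative of a language with respect to a word. -/
def dl {A T : Type} (L : Set (GList A T)) (u : GList A T) : Set (GList A T) :=
  { x | u ++ x ∈ L }

/-- An atom β over T₁ is 𝔱-consistent with an atom α over T₀. -/
def TConsistent {T₀ T₁ : Type} (𝔱 : T₀ → BExp T₁) (α : Set T₀) (β : Set T₁) : Prop :=
  ∀ t, t ∈ α ↔ (𝔱 t).holds β

/-- Atom-replacement relation induced by a test substitution 𝔱. -/
inductive TRel {A T₀ T₁ : Type} (𝔱 : T₀ → BExp T₁) : GList A T₀ → GList A T₁ → Prop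
  | nil : TRel 𝔱 [] []
  | atom {α : Set T₀} {β : Set T₁} {w : GList A T₀} {x : GList A T₁} :
      TConsistent 𝔱 α β → TRel 𝔱 w x → TRel 𝔱 (Sum.inl α :: w) (Sum.inl β :: x)
  | act {p : A} {w : GList A T₀} {x : GList A T₁} :
      TRel 𝔱 w x → TRel 𝔱 (Sum.inr p :: w) (Sum.inr p :: x)

/-- apply_𝔱 on guarded languages. -/
def applyT {A T₀ T₁ : Type} (𝔱 : T₀ → BExp T₁) (L : Set (GList A T₀)) : Set (GList A T₁) :=
  { x | ∃ w ∈ L, TRel 𝔱 w x }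

/-- Action-replacement relation induced by an action substitution 𝔰: each action is
replaced by a guarded string of 𝔰(p), fused with the surrounding atoms. -/
inductive SRel {A₀ A₁ T : Type} (𝔰 : A₀ → Set (GList A₁ T)) :
    GList A₀ T → GList A₁ T → Prop
  | single (α : Set T) : SRel 𝔰 [Sum.inl α] [Sum.inl α]
  | step {α β : Set T} {p : A₀} {u : GList A₁ T} {w : GList A₀ T} {x : GList A₁ T} :
      Sum.inl α :: u ++ [Sum.inl β] ∈ 𝔰 p →
      SRel 𝔰 (Sum.inl β :: w) (Sum.inl β :: x) →
      SRel 𝔰 (Sum.inl α :: Sum.inr p :: Sum.inl β :: w) (Sum.inl α :: u ++ Sum.inl β :: x)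

/-- apply^𝔰 on guarded languages. -/
def applyS {A₀ A₁ T : Type} (𝔰 : A₀ → Set (GList A₁ T)) (L : Set (GList A₀ T)) :
    Set (GList A₁ T) :=
  { x | ∃ w ∈ L, SRel 𝔰 w x }

/-- Builder for the guarded strings of the language L_k. -/
def buildLk {k : ℕ} : Fin k → Fin k → List (Fin k) → GList (Fin k) (Fin k)
  | cur, act, [] => [Sum.inl {cur}, Sum.inr act, Sum.inl {cur}]
  | cur, act, j :: rest => Sum.inl {cur} :: Sum.inr act :: buildLk j cur rest

/-- The language L_k of Definition 6.2. -/
def Lk (k : ℕ) (hk : 0 < k) : Set (GList (Fin k) (Fin k)) :=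
  { w | ∃ (i : Fin k) (rest : List (Fin k)),
      i ≠ ⟨0, hk⟩ ∧ List.Chain' (· ≠ ·) (i :: rest) ∧ w = buildLk i ⟨0, hk⟩ rest }

/-- k-density of a deterministic KAT automaton transition function. -/
def KDense {A T Q : Type} (δ : Q → Set T → Out A Q) (k : ℕ) : Prop :=
  ∃ (S : Fin k → Set Q) (α : Fin k → Set T) (pa : Q → Fin k → A),
    Function.Injective α ∧
    (∀ i, (S i).Nonempty) ∧
    (∀ i q, q ∈ S i → δ q (α i) = Out.accept) ∧
    (∀ i j q, i ≠ j → q ∈ S i → ∃ q' ∈ S j, δ q (α j) = Out.step (pa q j) q') ∧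
    (∀ i j m q q', q ∈ S i → q' ∈ S j → pa q m = pa q' m → i = j)

/-- The sequence of actions occurring in a guarded string. -/
def actsOf {A T : Type} (w : GList A T) : List A :=
  w.filterMap (fun x => match x with | .inl _ => none | .inr p => some p)

/-- The guarded language of a word over Σ: all guarded strings with that action sequence. -/
def wordLang {A T : Type} (ps : List A) : Set (GList A T) :=
  { w | IsGuarded w ∧ actsOf w = ps }

/-- Test expressions without test variables. -/
def BExp.varFree {T : Type} : BExp T → Prop
  | .tru => True
  | .fls => True
  | .var _ => False
  | .or b c => BExp.varFree b ∧ BExp.varFree c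
  | .and b c => BExp.varFree b ∧ BExp.varFree c
  | .not b => BExp.varFree b

/-- KA expressions: KAT expressions with no test variables. -/
def KExp.testFree {A T : Type} : KExp A T → Prop
  | .test b => b.varFree
  | .act _ => True
  | .plus e f => KExp.testFree e ∧ KExp.testFree f
  | .seq e f => KExp.testFree e ∧ KExp.testFree f
  | .star e => KExp.testFree e

/-!
A labeled path can be cut at any atom of its guarded string, and two paths whose guarded
strings end and begin with the same atom can be glued there. Hence the relation "joined by a
path whose guarded string lies in `L`" sends union to union, guarded composition to relational
composition and guarded star to reflexive-transitive closure, while for tests and atomic actions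
it is the relational semantics outright. Induction on `e` then identifies `R⟦e⟧` with the path
relation of `L(e)`, and language equivalence implies relational equivalence.
-/

section

variable {A T S : Type} {τ : T → Set S} {σ : A → S → S → Prop}

theorem BExp.mem_bsem_iff_holds (τ : T → Set S) (s : S) (b : BExp T) :
    s ∈ bsem τ b ↔ b.holds (atomOf τ s) := by
  induction b <;> simp_all [bsem, BExp.holds, atomOf]

namespace IsPath

theorem singleton_iff {s s' : S} {a : Set T ⊕ A} :
    IsPath τ σ s [a] s' ↔ s' = s ∧ a = .inl (atomOf τ s) := by
  constructor
  · rintro ⟨⟩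
    exact ⟨rfl, rfl⟩
  · rintro ⟨rfl, rfl⟩
    exact .nil _

theorem cons_cons_iff {s s' : S} {a b : Set T ⊕ A} {w : GList A T} :
    IsPath τ σ s (a :: b :: w) s' ↔
      a = .inl (atomOf τ s) ∧ ∃ p t, b = .inr p ∧ σ p s t ∧ IsPath τ σ t w s' := by
  constructor
  · rintro (_ | ⟨hp, hw⟩)
    exact ⟨rfl, _, _, rfl, hp, hw⟩
  · rintro ⟨rfl, p, t, rfl, hp, hw⟩
    exact .cons hp hw

theorem exists_eq_cons {s s' : S} {w : GList A T} (h : IsPath τ σ s w s') :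
    ∃ v, w = .inl (atomOf τ s) :: v := by
  cases h <;> exact ⟨_, rfl⟩

theorem exists_eq_append {s s' : S} {w : GList A T} (h : IsPath τ σ s w s') :
    ∃ u, w = u ++ [.inl (atomOf τ s')] := by
  induction h with
  | nil => exact ⟨[], rfl⟩
  | cons _ _ ih =>
    obtain ⟨u, rfl⟩ := ih
    exact ⟨_ :: _ :: u, rfl⟩

theorem head_eq {s s' : S} {α : Set T} {w : GList A T} (h : IsPath τ σ s (.inl α :: w) s') :
    α = atomOf τ s := by
  cases h <;> rfl

theorem append_iff {s s' : S} {u v : GList A T} {α : Set T} :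
    IsPath τ σ s (u ++ .inl α :: v) s' ↔
      ∃ m, IsPath τ σ s (u ++ [.inl α]) m ∧ IsPath τ σ m (.inl α :: v) s' := by
  induction u using List.twoStepInduction generalizing s with
  | nil =>
    simp only [List.nil_append, singleton_iff]
    exact ⟨fun h => ⟨s, ⟨rfl, by rw [head_eq h]⟩, h⟩, fun ⟨_, ⟨hm, _⟩, h⟩ => hm ▸ h⟩
  | singleton x => simp [cons_cons_iff]
  | cons_cons x y u ih _ =>
    simp only [List.cons_append, cons_cons_iff, ih]
    aesop

end IsPath

variable (τ σ) in
def pathRel (L : Set (GList A T)) (s s' : S) : Prop :=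
  ∃ w ∈ L, IsPath τ σ s w s'

theorem pathRel_testLang (b : BExp T) :
    pathRel τ σ (testLang b) = fun s s' => s = s' ∧ s ∈ bsem τ b := by
  ext s s'
  simp only [pathRel, testLang, Set.mem_ofPred_eq, BExp.mem_bsem_iff_holds]
  constructor
  · rintro ⟨_, ⟨α, hα, rfl⟩, h⟩
    obtain ⟨rfl, ⟨⟩⟩ := IsPath.singleton_iff.mp h
    exact ⟨rfl, hα⟩
  · rintro ⟨rfl, hs⟩
    exact ⟨_, ⟨_, hs, rfl⟩, .nil s⟩

theorem pathRel_act (p : A) :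
    pathRel τ σ {w | ∃ α β : Set T, w = [.inl α, .inr p, .inl β]} = σ p := by
  ext s s'
  simp only [pathRel, Set.mem_ofPred_eq]
  constructor
  · rintro ⟨_, ⟨α, β, rfl⟩, h⟩
    obtain ⟨-, p, t, ⟨⟩, hp, ht⟩ := IsPath.cons_cons_iff.mp h
    obtain ⟨rfl, -⟩ := IsPath.singleton_iff.mp ht
    exact hp
  · intro hp
    exact ⟨_, ⟨_, _, rfl⟩, .cons hp (.nil s')⟩

theorem pathRel_union (L K : Set (GList A T)) :
    pathRel τ σ (L ∪ K) = fun s s' => pathRel τ σ L s s' ∨ pathRel τ σ K s s' := by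
  ext s s'
  simp only [pathRel, Set.mem_union, or_and_right, exists_or]

theorem pathRel_gcomp (L K : Set (GList A T)) :
    pathRel τ σ (gcomp L K) = Relation.Comp (pathRel τ σ L) (pathRel τ σ K) := by
  ext s s'
  constructor
  · rintro ⟨_, ⟨u, α, v, hu, hv, rfl⟩, h⟩
    obtain ⟨m, hsm, hms'⟩ := IsPath.append_iff.mp h
    exact ⟨m, ⟨_, hu, hsm⟩, ⟨_, hv, hms'⟩⟩
  · rintro ⟨m, ⟨w, hw, hsm⟩, ⟨x, hx, hms'⟩⟩
    obtain ⟨u, rfl⟩ := hsm.exists_eq_append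
    obtain ⟨v, rfl⟩ := hms'.exists_eq_cons
    exact ⟨_, ⟨u, _, v, hw, hx, rfl⟩, IsPath.append_iff.mpr ⟨m, hsm, hms'⟩⟩

theorem pathRel_atomsLang : pathRel τ σ (atomsLang : Set (GList A T)) = Eq := by
  ext s s'
  simp only [pathRel, atomsLang, Set.mem_ofPred_eq]
  constructor
  · rintro ⟨_, ⟨α, rfl⟩, h⟩
    exact (IsPath.singleton_iff.mp h).1.symm
  · rintro rfl
    exact ⟨_, ⟨_, rfl⟩, .nil s⟩

theorem pathRel_gstar (L : Set (GList A T)) :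
    pathRel τ σ (gstar L) = Relation.ReflTransGen (pathRel τ σ L) := by
  have reflTransGen_of_gpow (n : ℕ) {s s'} (h : pathRel τ σ (gpow L n) s s') :
      Relation.ReflTransGen (pathRel τ σ L) s s' := by
    induction n generalizing s with
    | zero => rw [gpow, pathRel_atomsLang] at h; exact h ▸ .refl
    | succ n ih =>
      rw [gpow, pathRel_gcomp] at h
      obtain ⟨m, hsm, hms'⟩ := h
      exact .head hsm (ih hms')
  ext s s'
  constructor
  · rintro ⟨w, hw, h⟩
    obtain ⟨n, hn⟩ := Set.mem_iUnion.mp hw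
    exact reflTransGen_of_gpow n ⟨w, hn, h⟩
  · intro h
    obtain ⟨n, w, hw, hp⟩ : ∃ n, pathRel τ σ (gpow L n) s s' := by
      induction h using Relation.ReflTransGen.head_induction_on with
      | refl => exact ⟨0, by rw [gpow, pathRel_atomsLang]⟩
      | head hsm _ ih =>
        obtain ⟨n, hn⟩ := ih
        exact ⟨n + 1, by rw [gpow, pathRel_gcomp]; exact ⟨_, hsm, hn⟩⟩
    exact ⟨w, Set.mem_iUnion.mpr ⟨n, hw⟩, hp⟩

theorem rsem_eq_pathRel (e : KExp A T) : rsem τ σ e = pathRel τ σ (lang e) := by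
  induction e with
  | test b => exact (pathRel_testLang b).symm
  | act p => exact (pathRel_act p).symm
  | plus e f ihe ihf => rw [lang, pathRel_union, ← ihe, ← ihf]; rfl
  | seq e f ihe ihf => rw [lang, pathRel_gcomp, ← ihe, ← ihf]; rfl
  | star e ih => rw [lang, pathRel_gstar, ← ih]; rfl

end

/-- the relational semantics of a KAT expression consists exactly of the
pairs connected by a labeled path whose induced guarded string lies in L(e);
consequently, language equivalence implies relational equivalence. -/
theorem rsem_eq_paths {A T : Type} (e : KExp A T) :
    (∀ (S : Type) (τ : T → Set S) (σ : A → S → S → Prop) (s s' : S),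
      rsem τ σ e s s' ↔ ∃ w ∈ lang e, IsPath τ σ s w s') ∧
    (∀ f : KExp A T, lang e = lang f →
      ∀ (S : Type) (τ : T → Set S) (σ : A → S → S → Prop), rsem τ σ e = rsem τ σ f) := by
  refine ⟨fun S τ σ s s' => by rw [rsem_eq_pathRel]; rfl, fun f hef S τ σ => ?_⟩
  rw [rsem_eq_pathRel, rsem_eq_pathRel, hef]
end

section
/- For every GKAT expression e, the guarded language L(e) is deterministic: no string in L(e) is a proper prefix of another, and any two distinct strings in L(e) first differ at an atom. -/
/-! Every GKAT construct builds its language from deterministic pieces by guarded composition or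
by a union of two languages whose strings begin with atoms on opposite sides of a test `b`. Two
strings of a guarded composition either split at the same atom, and then the right factors
branch, or their left factors already branch, which survives appending. Two strings of such a
union that come from different sides differ already at their first atom. For `while b do e`,
the i-fold and j-fold unrollings are compared: peeling one iteration off both reduces `(i, j)`
to `(i - 1, j - 1)`, and when one side has no iterations left, its first atom fails `b` while
the other's satisfies it. -/

section Determinism

variable {A T : Type}

def Branching (w x : GList A T) : Prop :=
  ∃ (l w' x' : GList A T) (α β : Set T), α ≠ β ∧
    w = l ++ Sum.inl α :: w' ∧ x = l ++ Sum.inl β :: x'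

def JointlyDet (L K : Set (GList A T)) : Prop :=
  ∀ w ∈ L, ∀ x ∈ K, w ≠ x → Branching w x

def GuardedBy (b : BExp T) (L : Set (GList A T)) : Prop :=
  ∀ z ∈ L, ∃ α y, b.holds α ∧ z = Sum.inl α :: y

theorem branching_cons {α β : Set T} (h : α ≠ β) (w x : GList A T) :
    Branching (Sum.inl α :: w) (Sum.inl β :: x) :=
  ⟨[], w, x, α, β, h, rfl, rfl⟩

theorem Branching.symm {w x : GList A T} (h : Branching w x) : Branching x w := by
  obtain ⟨l, w', x', α, β, hαβ, rfl, rfl⟩ := h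
  exact ⟨l, x', w', β, α, hαβ.symm, rfl, rfl⟩

theorem Branching.append_left {w x : GList A T} (h : Branching w x) (u : GList A T) :
    Branching (u ++ w) (u ++ x) := by
  obtain ⟨l, w', x', α, β, hαβ, rfl, rfl⟩ := h
  exact ⟨u ++ l, w', x', α, β, hαβ, by simp, by simp⟩

theorem Branching.append_right {w x : GList A T} (h : Branching w x) (u v : GList A T) :
    Branching (w ++ u) (x ++ v) := by
  obtain ⟨l, w', x', α, β, hαβ, rfl, rfl⟩ := h
  exact ⟨l, w' ++ u, x' ++ v, α, β, hαβ, by simp, by simp⟩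

theorem JointlyDet.symm {L K : Set (GList A T)} (h : JointlyDet L K) : JointlyDet K L :=
  fun w hw x hx hne => (h x hx w hw hne.symm).symm

theorem JointlyDet.mono {L L' K K' : Set (GList A T)} (h : JointlyDet L K) (hL : L' ⊆ L)
    (hK : K' ⊆ K) : JointlyDet L' K' :=
  fun w hw x hx => h w (hL hw) x (hK hx)

theorem JointlyDet.gcomp {L L' K K' : Set (GList A T)} (hL : JointlyDet L L')
    (hK : JointlyDet K K') : JointlyDet (gcomp L K) (gcomp L' K') := by
  rintro _ ⟨w, α, x, hw, hx, rfl⟩ _ ⟨v, β, y, hv, hy, rfl⟩ hne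
  by_cases hsplit : w ++ [Sum.inl α] = v ++ [Sum.inl β]
  · obtain ⟨rfl, hαβ⟩ := List.append_inj' hsplit rfl
    obtain rfl : α = β := by simpa using hαβ
    exact (hK _ hx _ hy fun h => hne (by rw [h])).append_left w
  · simpa using (hL _ hw _ hv hsplit).append_right x y

theorem DetLang.gcomp {L K : Set (GList A T)} (hL : DetLang L) (hK : DetLang K) :
    DetLang (gcomp L K) :=
  JointlyDet.gcomp hL hK

theorem detLang_union {L K : Set (GList A T)} (hL : DetLang L) (hK : DetLang K)
    (hLK : JointlyDet L K) : DetLang (L ∪ K) := by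
  rintro w (hw | hw) x (hx | hx)
  exacts [hL w hw x hx, hLK w hw x hx, hLK.symm w hw x hx, hK w hw x hx]

theorem detLang_iUnion {ι : Type*} {L : ι → Set (GList A T)}
    (h : ∀ i j, JointlyDet (L i) (L j)) : DetLang (⋃ i, L i) := by
  intro w hw x hx
  obtain ⟨i, hw⟩ := Set.mem_iUnion.mp hw
  obtain ⟨j, hx⟩ := Set.mem_iUnion.mp hx
  exact h i j w hw x hx

theorem detLang_of_subset_atomsLang {L : Set (GList A T)} (h : L ⊆ atomsLang) : DetLang L := by
  intro w hw x hx hne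
  obtain ⟨α, rfl⟩ := h hw
  obtain ⟨β, rfl⟩ := h hx
  exact branching_cons (fun hαβ => hne (by rw [hαβ])) [] []

theorem testLang_subset_atomsLang (b : BExp T) : (testLang b : Set (GList A T)) ⊆ atomsLang :=
  fun _ ⟨α, _, hw⟩ => ⟨α, hw⟩

theorem detLang_testLang (b : BExp T) : DetLang (testLang b : Set (GList A T)) :=
  detLang_of_subset_atomsLang (testLang_subset_atomsLang b)

theorem detLang_act (p : A) :
    DetLang {w : GList A T | ∃ α β : Set T, w = [Sum.inl α, Sum.inr p, Sum.inl β]} := by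
  rintro _ ⟨α, β, rfl⟩ _ ⟨α', β', rfl⟩ hne
  by_cases hα : α = α'
  · subst hα
    exact (branching_cons (fun h => hne (by rw [h])) [] []).append_left [Sum.inl α, Sum.inr p]
  · exact branching_cons hα _ _

theorem jointlyDet_of_guardedBy {b : BExp T} {L K : Set (GList A T)} (hL : GuardedBy b L)
    (hK : GuardedBy b.not K) : JointlyDet L K := by
  intro w hw x hx _
  obtain ⟨α, w', hα, rfl⟩ := hL w hw
  obtain ⟨β, x', hβ, rfl⟩ := hK x hx
  exact branching_cons (fun h => hβ (by subst h; exact hα)) w' x'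

theorem guardedBy_testLang (b : BExp T) : GuardedBy b (testLang b : Set (GList A T)) :=
  fun _ ⟨α, hα, hw⟩ => ⟨α, [], hα, hw⟩

theorem GuardedBy.gcomp {b : BExp T} {L : Set (GList A T)} (hL : GuardedBy b L)
    (K : Set (GList A T)) : GuardedBy b (gcomp L K) := by
  rintro _ ⟨w, α, x, hw, -, rfl⟩
  obtain ⟨β, y, hβ, hwy⟩ := hL _ hw
  cases w with
  | nil =>
    obtain ⟨rfl, -⟩ : α = β ∧ [] = y := by simpa using hwy
    exact ⟨α, x, hβ, rfl⟩
  | cons c w =>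
    obtain ⟨rfl, -⟩ := List.cons_eq_cons.mp hwy
    exact ⟨β, w ++ Sum.inl α :: x, hβ, rfl⟩

theorem gcomp_atomsLang_subset (K : Set (GList A T)) : gcomp atomsLang K ⊆ K := by
  rintro _ ⟨w, α, x, ⟨β, hw⟩, hx, rfl⟩
  obtain ⟨rfl, -⟩ := List.append_eq_singleton_iff.mp hw |>.resolve_right (by simp)
  exact hx

theorem gcomp_gcomp_subset (L K N : Set (GList A T)) :
    gcomp (gcomp L K) N ⊆ gcomp L (gcomp K N) := by
  rintro _ ⟨u, γ, y, ⟨w, α, x, hw, hx, hu⟩, hy, rfl⟩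
  rcases x.eq_nil_or_concat with rfl | ⟨x, c, rfl⟩
  · obtain ⟨rfl, hγ⟩ := List.append_inj' hu rfl
    obtain rfl : γ = α := by simpa using hγ
    exact ⟨u, γ, y, hw, ⟨[], γ, y, hx, hy, rfl⟩, rfl⟩
  · have hu' : u ++ [Sum.inl γ] = (w ++ Sum.inl α :: x) ++ [c] := by simpa using hu
    obtain ⟨rfl, hc⟩ := List.append_inj' hu' rfl
    obtain rfl : c = Sum.inl γ := by simpa using hc.symm
    exact ⟨w, α, x ++ Sum.inl γ :: y, hw,
      ⟨Sum.inl α :: x, γ, y, by simpa using hx, hy, rfl⟩, by simp⟩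

theorem gcomp_iUnion_subset {ι : Type*} (L : ι → Set (GList A T)) (K : Set (GList A T)) :
    gcomp (⋃ i, L i) K ⊆ ⋃ i, gcomp (L i) K := by
  rintro _ ⟨w, α, x, hw, hx, rfl⟩
  obtain ⟨i, hw⟩ := Set.mem_iUnion.mp hw
  exact Set.mem_iUnion.mpr ⟨i, w, α, x, hw, hx, rfl⟩

theorem jointlyDet_gcomp_gpow {b : BExp T} {M N : Set (GList A T)} (hM : DetLang M)
    (hMb : GuardedBy b M) (hN : DetLang N) (hNb : GuardedBy b.not N) :
    ∀ i j, JointlyDet (gcomp (gpow M i) N) (gcomp (gpow M j) N) := by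
  have unroll : ∀ k, gcomp (gpow M (k + 1)) N ⊆ gcomp M (gcomp (gpow M k) N) :=
    fun k => gcomp_gcomp_subset M (gpow M k) N
  have exit_vs_loop : ∀ k, JointlyDet (gcomp (gpow M (k + 1)) N) (gcomp (gpow M 0) N) := fun k =>
    (jointlyDet_of_guardedBy (hMb.gcomp _) hNb).mono (unroll k) (gcomp_atomsLang_subset N)
  intro i
  induction i with
  | zero =>
    rintro (_ | j)
    · exact (detLang_of_subset_atomsLang subset_rfl).gcomp hN
    · exact (exit_vs_loop j).symm
  | succ i ih =>
    rintro (_ | j)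
    · exact exit_vs_loop i
    · exact (JointlyDet.gcomp hM (ih j)).mono (unroll i) (unroll j)

theorem detLang_gcomp_gstar {b : BExp T} {M N : Set (GList A T)} (hM : DetLang M)
    (hMb : GuardedBy b M) (hN : DetLang N) (hNb : GuardedBy b.not N) :
    DetLang (gcomp (gstar M) N) :=
  JointlyDet.mono (detLang_iUnion (jointlyDet_gcomp_gpow hM hMb hN hNb))
    (gcomp_iUnion_subset _ N) (gcomp_iUnion_subset _ N)

end Determinism

/-- every GKAT expression denotes a deterministic guarded language. -/
theorem glang_deterministic {A T : Type} (e : GExp A T) : DetLang (glang e) := by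
  induction e with
  | assert b => exact detLang_testLang b
  | act p => exact detLang_act p
  | seq e f ihe ihf => exact ihe.gcomp ihf
  | ite b e f ihe ihf =>
    exact detLang_union ((detLang_testLang b).gcomp ihe) ((detLang_testLang b.not).gcomp ihf)
      (jointlyDet_of_guardedBy ((guardedBy_testLang b).gcomp _)
        ((guardedBy_testLang b.not).gcomp _))
  | whl b e ihe =>
    exact detLang_gcomp_gstar ((detLang_testLang b).gcomp ihe)
      ((guardedBy_testLang b).gcomp _) (detLang_testLang b.not) (guardedBy_testLang b.not)
end

section
/- Every deterministic regular guarded language is recognized by a deterministic KAT automaton, obtained via Brzozowski derivatives: for a deterministic regular guarded language L and atom α, exactly one of (1) L_α = ∅, (2) L_α = {ε}, (3) there is a unique p ∈ Σ with L_{αp} ≠ ∅ holds, and the automaton on states { L_w : w ∈ (At·Σ)* } with the induced transition function accepts exactly L. -/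
/-!
The states of the automaton are the derivatives `L_u`. Determinism makes `L` prefix-free and
forces two members with a common prefix to diverge first at an atom, never at an action.
Hence, reading an atom `α` in a state `K`, either `[α] ∈ K` and `K_α = {ε}` (accept), or
`K_α = ∅` (reject), or there is exactly one action `p` that can follow, and the automaton
steps to `K_{αp}`, which is again deterministic and guarded.
-/

theorem List.append_cons_eq_of_ne {α : Type*} {l u w x y z : List α} {c d a b : α}
    (hcd : c ≠ d) (hab : a ≠ b) (h₁ : l ++ c :: w = u ++ a :: y)
    (h₂ : l ++ d :: x = u ++ b :: z) : l = u ∧ c = a ∧ d = b := by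
  induction l generalizing u with
  | nil =>
    cases u with
    | nil => simp_all
    | cons e u =>
      simp only [List.nil_append, List.cons_append, List.cons.injEq] at h₁ h₂
      exact absurd (h₁.1.trans h₂.1.symm) hcd
  | cons e l ih =>
    cases u with
    | nil =>
      simp only [List.nil_append, List.cons_append, List.cons.injEq] at h₁ h₂
      exact absurd (h₁.1.symm.trans h₂.1) hab
    | cons f u =>
      simp only [List.cons_append, List.cons.injEq] at h₁ h₂
      obtain ⟨rfl, h₁⟩ := h₁
      exact (ih h₁ h₂.2).imp_left (congrArg _)

theorem IsGuarded.of_cons_cons {A T : Type} {a : Set T ⊕ A} {p : A} {x : GList A T}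
    (h : IsGuarded (a :: Sum.inr p :: x)) : IsGuarded x := by
  cases h
  assumption

section Derivative

variable {A T : Type}

theorem dl_dl (L : Set (GList A T)) (u v : GList A T) : dl (dl L u) v = dl L (u ++ v) := by
  ext x
  simp [dl, List.append_assoc]

theorem dl_atom_act_eq_empty {L : Set (GList A T)} {α : Set T} (h : dl L [Sum.inl α] ⊆ {[]})
    (p : A) : dl L [Sum.inl α, Sum.inr p] = ∅ :=
  Set.eq_empty_of_forall_notMem fun _ hx => List.cons_ne_nil _ _ (h hx)

theorem detLang_dl {L : Set (GList A T)} (hd : DetLang L) (u : GList A T) :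
    DetLang (dl L u) := by
  intro w hw x hx hne
  obtain ⟨l, w', x', α, β, hαβ, hw', hx'⟩ := hd _ hw _ hx (by simpa using hne)
  rcases List.append_eq_append_iff.mp hw' with ⟨m, rfl, rfl⟩ | ⟨c, rfl, hc⟩
  · simp only [List.append_assoc, List.append_cancel_left_eq] at hx'
    exact ⟨m, w', x', α, β, hαβ, rfl, hx'⟩
  · cases c with
    | nil =>
      simp only [List.append_nil, List.nil_append, List.append_cancel_left_eq] at hc hx'
      exact ⟨[], w', x', α, β, hαβ, hc.symm, hx'⟩
    | cons e c =>
      simp only [List.cons_append, List.append_assoc, List.append_cancel_left_eq,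
        List.cons.injEq] at hc hx'
      exact absurd (Sum.inl_injective (hc.1.trans hx'.1)) hαβ

namespace DetLang

variable {L : Set (GList A T)}

theorem append_cons_notMem_of_mem (hd : DetLang L) {u y : GList A T} {a : Set T ⊕ A}
    (hu : u ∈ L) : u ++ a :: y ∉ L := fun h => by
  obtain ⟨l, w', x', α, β, hαβ, rfl, hx⟩ := hd _ hu _ h (by simp)
  simp only [List.append_assoc, List.cons_append, List.append_cancel_left_eq,
    List.cons.injEq] at hx
  exact hαβ (Sum.inl_injective hx.1)

theorem act_eq (hd : DetLang L) {u y z : GList A T} {p q : A} (hp : u ++ Sum.inr p :: y ∈ L)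
    (hq : u ++ Sum.inr q :: z ∈ L) : p = q := by
  by_contra hpq
  have hne : (Sum.inr p : Set T ⊕ A) ≠ Sum.inr q := fun h => hpq (Sum.inr_injective h)
  obtain ⟨l, w', x', α, β, hαβ, hw, hx⟩ := hd _ hp _ hq (by simp [hpq])
  obtain ⟨-, h, -⟩ := List.append_cons_eq_of_ne (Sum.inl_injective.ne hαβ) hne hw.symm hx.symm
  exact Sum.inl_ne_inr h

theorem dl_atom_eq_singleton (hd : DetLang L) {α : Set T} (h : [Sum.inl α] ∈ L) :
    dl L [Sum.inl α] = {[]} := by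
  ext x
  cases x with
  | nil => simpa [dl] using h
  | cons a x =>
    simp only [Set.mem_singleton_iff, reduceCtorEq, iff_false]
    exact hd.append_cons_notMem_of_mem h

theorem existsUnique_act (hd : DetLang L) (hg : ∀ w ∈ L, IsGuarded w) {α : Set T}
    (hne : (dl L [Sum.inl α]).Nonempty) (hα : [Sum.inl α] ∉ L) :
    ∃! p : A, (dl L [Sum.inl α, Sum.inr p]).Nonempty := by
  obtain ⟨x, hx⟩ := hne
  have hgx : IsGuarded (Sum.inl α :: x) := hg _ hx
  cases hgx with
  | single => exact absurd hx hα
  | cons _ p _ =>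
    exact ⟨p, ⟨_, hx⟩, fun q ⟨_, hq⟩ => (hd.act_eq (u := [Sum.inl α]) hx hq).symm⟩

theorem dl_atom_trichotomy (hd : DetLang L) (hg : ∀ w ∈ L, IsGuarded w) (α : Set T) :
    (dl L [Sum.inl α] = ∅ ∧ dl L [Sum.inl α] ≠ {[]} ∧
        ¬ ∃! p : A, dl L [Sum.inl α, Sum.inr p] ≠ ∅) ∨
    (dl L [Sum.inl α] ≠ ∅ ∧ dl L [Sum.inl α] = {[]} ∧
        ¬ ∃! p : A, dl L [Sum.inl α, Sum.inr p] ≠ ∅) ∨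
    (dl L [Sum.inl α] ≠ ∅ ∧ dl L [Sum.inl α] ≠ {[]} ∧
        ∃! p : A, dl L [Sum.inl α, Sum.inr p] ≠ ∅) := by
  have no_act (h : dl L [Sum.inl α] ⊆ {[]}) : ¬ ∃! p : A, dl L [Sum.inl α, Sum.inr p] ≠ ∅ :=
    fun ⟨p, hp, _⟩ => hp (dl_atom_act_eq_empty h p)
  by_cases hα : [Sum.inl α] ∈ L
  · have hsing := hd.dl_atom_eq_singleton hα
    refine Or.inr (Or.inl ⟨?_, hsing, no_act hsing.le⟩)
    simp [hsing]
  by_cases hempty : dl L [Sum.inl α] = ∅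
  · refine Or.inl ⟨hempty, ?_, no_act (by simp [hempty])⟩
    simp [hempty]
  refine Or.inr (Or.inr ⟨hempty, fun h => hα (by simpa [dl] using h.ge rfl), ?_⟩)
  simpa only [Set.nonempty_iff_ne_empty] using
    hd.existsUnique_act hg (Set.nonempty_iff_ne_empty.mpr hempty) hα

end DetLang

end Derivative

section Automaton

variable {A T : Type} {L : Set (GList A T)}

theorem dl_mem_range_dl (K : Set.range (dl L)) (v : GList A T) :
    dl K v ∈ Set.range (dl L) := by
  obtain ⟨u, hu⟩ := K.2
  exact ⟨u ++ v, by rw [← dl_dl, hu]⟩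

open Classical in
noncomputable def brzDelta (L : Set (GList A T)) (K : Set.range (dl L)) (α : Set T) :
    Out A (Set.range (dl L)) :=
  if [Sum.inl α] ∈ (K : Set (GList A T)) then .accept
  else if h : ∃ p : A, (dl K [Sum.inl α, Sum.inr p]).Nonempty then
    .step h.choose ⟨_, dl_mem_range_dl K [Sum.inl α, Sum.inr h.choose]⟩
  else .reject

theorem brzDelta_of_mem {K : Set.range (dl L)} {α : Set T}
    (h : [Sum.inl α] ∈ (K : Set (GList A T))) : brzDelta L K α = .accept := by
  simp [brzDelta, h]

theorem brzDelta_of_cons_cons_mem {K : Set.range (dl L)} (hd : DetLang (K : Set (GList A T)))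
    {α : Set T} {p : A} {y : GList A T}
    (h : Sum.inl α :: Sum.inr p :: y ∈ (K : Set (GList A T))) :
    brzDelta L K α = .step p ⟨_, dl_mem_range_dl K [Sum.inl α, Sum.inr p]⟩ := by
  have hα : [Sum.inl α] ∉ (K : Set (GList A T)) := fun hα =>
    hd.append_cons_notMem_of_mem hα h
  have hex : ∃ q : A, (dl K [Sum.inl α, Sum.inr q]).Nonempty := ⟨p, y, h⟩
  have hchoose : hex.choose = p := by
    obtain ⟨z, hz⟩ := hex.choose_spec
    exact hd.act_eq (u := [Sum.inl α]) hz h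
  simp only [brzDelta, hα, hex, if_false, dif_pos]
  congr

theorem mem_of_accFrom_brzDelta {γ : Set T → Out A (Set.range (dl L))} {w : GList A T}
    (h : AccFrom (brzDelta L) γ w) (K : Set.range (dl L)) (hK : γ = brzDelta L K) :
    w ∈ (K : Set (GList A T)) := by
  induction h generalizing K with
  | accept hγ =>
    subst hK
    unfold brzDelta at hγ
    split_ifs at hγ with hα
    exact hα
  | step hγ _ ih =>
    subst hK
    unfold brzDelta at hγ
    split_ifs at hγ
    cases hγ
    exact ih _ rfl

theorem accFrom_brzDelta_of_mem {w : GList A T} (hw : IsGuarded w) (K : Set.range (dl L))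
    (hd : DetLang (K : Set (GList A T))) (hg : ∀ x ∈ (K : Set (GList A T)), IsGuarded x)
    (hmem : w ∈ (K : Set (GList A T))) : AccFrom (brzDelta L) (brzDelta L K) w := by
  induction hw generalizing K with
  | single α => exact .accept (brzDelta_of_mem hmem)
  | cons α p _ ih =>
    refine .step (brzDelta_of_cons_cons_mem hd hmem) (ih _ (detLang_dl hd _) ?_ hmem)
    exact fun x hx => (hg _ hx).of_cons_cons

theorem accFrom_brzDelta_iff {K : Set.range (dl L)} (hd : DetLang (K : Set (GList A T)))
    (hg : ∀ x ∈ (K : Set (GList A T)), IsGuarded x) {w : GList A T} :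
    AccFrom (brzDelta L) (brzDelta L K) w ↔ w ∈ (K : Set (GList A T)) :=
  ⟨fun h => mem_of_accFrom_brzDelta h K rfl,
    fun h => accFrom_brzDelta_of_mem (hg w h) K hd hg h⟩

end Automaton

/-- every deterministic regular guarded language satisfies the Brzozowski
derivative trichotomy and is recognized by a (finite) deterministic KAT automaton. -/
theorem det_regular_recognized {A T : Type} (L : Set (GList A T))
    (hg : ∀ w ∈ L, IsGuarded w) (hd : DetLang L)
    (hr : (Set.range (dl L)).Finite) :
    (∀ α : Set T,
      (dl L [Sum.inl α] = ∅ ∧ dl L [Sum.inl α] ≠ {[]} ∧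
          ¬ ∃! p : A, dl L [Sum.inl α, Sum.inr p] ≠ ∅) ∨
      (dl L [Sum.inl α] ≠ ∅ ∧ dl L [Sum.inl α] = {[]} ∧
          ¬ ∃! p : A, dl L [Sum.inl α, Sum.inr p] ≠ ∅) ∨
      (dl L [Sum.inl α] ≠ ∅ ∧ dl L [Sum.inl α] ≠ {[]} ∧
          ∃! p : A, dl L [Sum.inl α, Sum.inr p] ≠ ∅)) ∧
    ∃ (Q : Type) (_ : Fintype Q) (δ : Q → Set T → Out A Q) (ι : Set T → Out A Q),
      { w | AccFrom δ ι w } = L := by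
  refine ⟨hd.dl_atom_trichotomy hg, Set.range (dl L), hr.fintype, brzDelta L,
    brzDelta L ⟨L, [], rfl⟩, ?_⟩
  ext w
  exact accFrom_brzDelta_iff (K := ⟨L, [], rfl⟩) hd hg
end

section
/- The problem of deciding whether a given KAT expression denotes a deterministic guarded language is coNP-hard: for any propositional formula φ over variables T, the KAT expression b_φ·(p₁ + p₂) (with distinct actions p₁ ≠ p₂) has a deterministic language if and only if φ is unsatisfiable. -/
/-! If an atom α satisfies b, then α p₁ α and α p₂ α both belong to the language of
b·(p₁ + p₂) and first differ at an action, which determinism forbids; if b is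
unsatisfiable, the language is empty. -/

section GuardedLanguages

variable {A T : Type}

theorem cons_mem_gcomp_testLang {b : BExp T} {K : Set (GList A T)} {α : Set T}
    {x : GList A T} (hα : b.holds α) (hx : Sum.inl α :: x ∈ K) :
    Sum.inl α :: x ∈ gcomp (testLang b) K :=
  ⟨[], α, x, ⟨α, hα, rfl⟩, hx, rfl⟩

theorem gcomp_testLang_eq_empty {b : BExp T} (hb : ¬ ∃ α : Set T, b.holds α)
    (K : Set (GList A T)) : gcomp (testLang b) K = ∅ :=
  Set.eq_empty_of_forall_notMem fun _ ⟨_, _, _, ⟨α, hα, _⟩, _⟩ => hb ⟨α, hα⟩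

theorem detLang_empty : DetLang (∅ : Set (GList A T)) :=
  fun _ hw => hw.elim

theorem not_detLang_of_first_action_ne {L : Set (GList A T)} {α : Set T} {p q : A}
    {w x : GList A T} (hpq : p ≠ q) (hw : Sum.inl α :: Sum.inr p :: w ∈ L)
    (hx : Sum.inl α :: Sum.inr q :: x ∈ L) : ¬ DetLang L := by
  intro hdet
  obtain ⟨l, w', x', β, γ, hβγ, hw', hx'⟩ := hdet _ hw _ hx (by simp [hpq])
  match l, hw', hx' with
  | [], hw', hx' =>
    simp only [List.nil_append, List.cons.injEq, Sum.inl.injEq] at hw' hx'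
    exact hβγ (hw'.1.symm.trans hx'.1)
  | [_], hw', _ =>
    simp at hw'
  | _ :: _ :: _, hw', hx' =>
    simp only [List.cons_append, List.cons.injEq] at hw' hx'
    exact hpq (Sum.inr.inj (hw'.2.1.trans hx'.2.1.symm))

end GuardedLanguages

/-- coNP-hardness reduction — b·(p₁+p₂) is deterministic iff b is
unsatisfiable. -/
theorem det_conp_hard {A T : Type} (b : BExp T) (p₁ p₂ : A) (hp : p₁ ≠ p₂) :
    DetLang (lang (KExp.seq (KExp.test b) (KExp.plus (KExp.act p₁) (KExp.act p₂)))) ↔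
      ¬ ∃ α : Set T, b.holds α := by
  constructor
  · rintro hdet ⟨α, hα⟩
    have hmem₁ : [Sum.inl α, Sum.inr p₁, Sum.inl α] ∈
        lang (KExp.seq (KExp.test b) (KExp.plus (KExp.act p₁) (KExp.act p₂))) :=
      cons_mem_gcomp_testLang hα (Or.inl ⟨α, α, rfl⟩)
    have hmem₂ : [Sum.inl α, Sum.inr p₂, Sum.inl α] ∈
        lang (KExp.seq (KExp.test b) (KExp.plus (KExp.act p₁) (KExp.act p₂))) :=
      cons_mem_gcomp_testLang hα (Or.inr ⟨α, α, rfl⟩)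
    exact not_detLang_of_first_action_ne hp hmem₁ hmem₂ hdet
  · intro hunsat
    rw [lang, lang, gcomp_testLang_eq_empty hunsat]
    exact detLang_empty
end

section
/- Binary intersection of guarded languages is not a regular operation: there is no KAT expression e over action variables {p₁, p₂} and no tests such that for all guarded languages L₁, L₂, the substitution operation O_e(L₁, L₂) equals L₁ ∩ L₂. -/
theorem SRel.exists_swap_of_single_action {A₀ A₁ T : Type} {𝔰 : A₀ → Set (GList A₁ T)}
    {w : GList A₀ T} {a b : Set T} {q : A₁}
    (h : SRel 𝔰 w [Sum.inl a, Sum.inr q, Sum.inl b]) :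
    ∃ p, [Sum.inl a, Sum.inr q, Sum.inl b] ∈ 𝔰 p ∧
      ∀ q', [Sum.inl a, Sum.inr q', Sum.inl b] ∈ 𝔰 p →
        SRel 𝔰 w [Sum.inl a, Sum.inr q', Sum.inl b] := by
  generalize hx : ([Sum.inl a, Sum.inr q, Sum.inl b] : GList A₁ T) = x at h
  cases h with
  | single => simp at hx
  | @step _ _ p u _ _ hmem htail =>
    rcases u with _ | ⟨_, _ | ⟨_, _⟩⟩ <;>
      simp only [List.cons_append, List.nil_append, List.cons.injEq, Sum.inl.injEq, List.nil_eq,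
        List.append_eq_nil_iff, reduceCtorEq, false_and, and_false] at hx
    obtain ⟨rfl, rfl, rfl, rfl⟩ := hx
    exact ⟨p, hmem, fun q' hq' => SRel.step (u := [Sum.inr q']) hq' htail⟩

theorem exists_swap_of_single_action_mem_applyS {A₀ A₁ T : Type}
    {𝔰 : A₀ → Set (GList A₁ T)} {L : Set (GList A₀ T)} {a b : Set T} {q : A₁}
    (h : [Sum.inl a, Sum.inr q, Sum.inl b] ∈ applyS 𝔰 L) :
    ∃ p, [Sum.inl a, Sum.inr q, Sum.inl b] ∈ 𝔰 p ∧
      ∀ q', [Sum.inl a, Sum.inr q', Sum.inl b] ∈ 𝔰 p →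
        [Sum.inl a, Sum.inr q', Sum.inl b] ∈ applyS 𝔰 L := by
  obtain ⟨w, hw, hrel⟩ := h
  obtain ⟨p, hq, hswap⟩ := hrel.exists_swap_of_single_action
  exact ⟨p, hq, fun q' hq' => ⟨w, hw, hswap q' hq'⟩⟩

/-- binary intersection of guarded languages is not a regular operation. -/
theorem intersection_not_regular :
    ¬ ∃ e : KExp (Fin 2) Empty,
      ∀ (A T : Type) (L₁ L₂ : Set (GList A T)),
        (∀ w ∈ L₁, IsGuarded w) → (∀ w ∈ L₂, IsGuarded w) →
        applyS (fun i => if i = 0 then L₁ else L₂)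
          (applyT (fun t => t.elim) (lang e)) = L₁ ∩ L₂ := by
  rintro ⟨e, he⟩
  let u : Fin 3 → GList (Fin 3) Empty := fun i => [Sum.inl ∅, Sum.inr i, Sum.inl ∅]
  let L₁ : Set (GList (Fin 3) Empty) := {u 0, u 1}
  let L₂ : Set (GList (Fin 3) Empty) := {u 1, u 2}
  have hO := he (Fin 3) Empty L₁ L₂
    (by rintro w (rfl | rfl) <;> exact .cons _ _ (.single _))
    (by rintro w (rfl | rfl) <;> exact .cons _ _ (.single _))
  have hu₁ : u 1 ∈ L₁ ∩ L₂ := ⟨Or.inr rfl, Or.inl rfl⟩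
  obtain ⟨p, -, hswap⟩ := exists_swap_of_single_action_mem_applyS (hO ▸ hu₁)
  obtain ⟨q, hq, hq_not⟩ : ∃ q, u q ∈ (if p = 0 then L₁ else L₂) ∧ u q ∉ L₁ ∩ L₂ := by
    fin_cases p
    · exact ⟨0, Or.inl rfl, fun h => by rcases h.2 with h | h <;> simp [u] at h⟩
    · exact ⟨2, Or.inr rfl, fun h => by rcases h.1 with h | h <;> simp [u] at h⟩
  exact hq_not (hO ▸ hswap q hq)
end

section
/- The language L_k (all guarded strings α_{i₁} p₁ α_{i₂} p_{i₁} α_{i₃} p_{i₂} ... α_{i_n} p_{i_{n-1}} α_{i_n} with n ≥ 1, i₁ ≠ 1, and consecutive indices distinct) is a deterministic regular guarded language. -/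
section Aux

variable {k : ℕ}

lemma buildLk_cons (i a : Fin k) (r : List (Fin k)) :
    ∃ t, buildLk i a r = Sum.inl ({i} : Set (Fin k)) :: Sum.inr a :: t := by
  cases r with
  | nil => exact ⟨[Sum.inl {i}], rfl⟩
  | cons j r' => exact ⟨buildLk j i r', rfl⟩

lemma buildLk_guarded : ∀ (r : List (Fin k)) (i a : Fin k), IsGuarded (buildLk i a r)
  | [], i, a => IsGuarded.cons _ _ (IsGuarded.single _)
  | j :: r', i, a => IsGuarded.cons _ _ (buildLk_guarded r' j i)

lemma singleton_ne {i j : Fin k} (h : i ≠ j) : ({i} : Set (Fin k)) ≠ {j} := by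
  simpa [Set.singleton_eq_singleton_iff] using h

lemma buildLk_diff : ∀ (rest rest' : List (Fin k)) (i i' a : Fin k),
    List.Chain' (· ≠ ·) (i :: rest) → List.Chain' (· ≠ ·) (i' :: rest') →
    (i ≠ i' ∨ rest ≠ rest') →
    ∃ (l w' x' : GList (Fin k) (Fin k)) (α β : Set (Fin k)), α ≠ β ∧
      buildLk i a rest = l ++ Sum.inl α :: w' ∧ buildLk i' a rest' = l ++ Sum.inl β :: x' := by
  intro rest
  induction rest with
  | nil =>
    intro rest' i i' a hc hc' hne
    rcases eq_or_ne i i' with rfl | hii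
    · rcases hne with h | h
      · exact absurd rfl h
      · cases rest' with
        | nil => exact absurd rfl h
        | cons j r' =>
          obtain ⟨t, ht⟩ := buildLk_cons j i r'
          have hji : j ≠ i := (List.isChain_cons_cons.mp hc').1.symm
          refine ⟨[Sum.inl {i}, Sum.inr a], [], Sum.inr i :: t, {i}, {j},
            singleton_ne hji.symm, rfl, ?_⟩
          simp [buildLk, ht]
    · obtain ⟨t, ht⟩ := buildLk_cons i a ([] : List (Fin k))
      obtain ⟨t', ht'⟩ := buildLk_cons i' a rest'
      exact ⟨[], Sum.inr a :: t, Sum.inr a :: t', {i}, {i'}, singleton_ne hii, by simp [ht], by simp [ht']⟩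
  | cons j r ih =>
    intro rest' i i' a hc hc' hne
    rcases eq_or_ne i i' with rfl | hii
    · have hrr : (j :: r) ≠ rest' := by
        rcases hne with h | h
        · exact absurd rfl h
        · exact h
      cases rest' with
      | nil =>
        obtain ⟨t, ht⟩ := buildLk_cons j i r
        have hji : j ≠ i := (List.isChain_cons_cons.mp hc).1.symm
        refine ⟨[Sum.inl {i}, Sum.inr a], Sum.inr i :: t, [], {j}, {i},
          singleton_ne hji, ?_, rfl⟩
        simp [buildLk, ht]
      | cons j' r' =>
        have h1 : List.Chain' (· ≠ ·) (j :: r) := hc.tail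
        have h2 : List.Chain' (· ≠ ·) (j' :: r') := hc'.tail
        have hne2 : j ≠ j' ∨ r ≠ r' := by
          by_contra hcon
          push_neg at hcon
          exact hrr (by rw [hcon.1, hcon.2])
        obtain ⟨l, w', x', α, β, hab, e1, e2⟩ := ih r' j j' i h1 h2 hne2
        exact ⟨Sum.inl {i} :: Sum.inr a :: l, w', x', α, β, hab,
          by simp [buildLk, e1], by simp [buildLk, e2]⟩
    · obtain ⟨t, ht⟩ := buildLk_cons i a (j :: r)
      obtain ⟨t', ht'⟩ := buildLk_cons i' a rest'
      exact ⟨[], Sum.inr a :: t, Sum.inr a :: t', {i}, {i'}, singleton_ne hii, by simp [ht], by simp [ht']⟩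

end Aux

section Reg

/-- The "mid-word after an action" derivative language: continuations from current index c. -/
def lkE (k : ℕ) (c : Fin k) : Set (GList (Fin k) (Fin k)) :=
  { w | w = [Sum.inl {c}] ∨
    ∃ j rest, j ≠ c ∧ List.Chain' (· ≠ ·) (j :: rest) ∧ w = buildLk j c rest }

/-- States of the derivative automaton for L_k. -/
inductive LkSt (k : ℕ) where
  | start | dead | done
  | mid (b c : Fin k)
  | post (c : Fin k)
  deriving DecidableEq, Fintype

/-- Denotation of each state. -/
def lkDen (k : ℕ) (hk : 0 < k) : LkSt k → Set (GList (Fin k) (Fin k))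
  | .start => Lk k hk
  | .dead => ∅
  | .done => {[]}
  | .mid b c => { w | ∃ y ∈ lkE k c, w = Sum.inr b :: y }
  | .post c => lkE k c

open Classical in
/-- Transition function of the derivative automaton. -/
noncomputable def lkδ (k : ℕ) (hk : 0 < k) : LkSt k → (Set (Fin k) ⊕ Fin k) → LkSt k
  | .start, Sum.inl α =>
      if h : ∃ c : Fin k, c ≠ ⟨0, hk⟩ ∧ α = {c} then .mid ⟨0, hk⟩ h.choose else .dead
  | .start, Sum.inr _ => .dead
  | .mid b c, Sum.inr p => if p = b then .post c else .dead
  | .mid _ _, Sum.inl _ => .dead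
  | .post c, Sum.inl α =>
      if α = ({c} : Set (Fin k)) then .done
      else if h : ∃ j : Fin k, j ≠ c ∧ α = {j} then .mid c h.choose else .dead
  | .post _, Sum.inr _ => .dead
  | .dead, _ => .dead
  | .done, _ => .dead

lemma dl_L_atom (k : ℕ) (hk : 0 < k) (c : Fin k) (hc : c ≠ ⟨0, hk⟩) :
    dl (Lk k hk) [Sum.inl {c}] = { w | ∃ y ∈ lkE k c, w = Sum.inr ⟨0, hk⟩ :: y } := by
  ext x
  simp only [dl, Set.mem_setOf_eq, List.cons_append, List.nil_append]
  constructor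
  · rintro ⟨i, rest, hi, hch, hb⟩
    cases rest with
    | nil =>
      simp only [buildLk, List.cons.injEq, Sum.inl.injEq] at hb
      obtain ⟨h1, h2⟩ := hb
      have hic : i = c := Set.singleton_eq_singleton_iff.mp h1.symm
      subst hic
      exact ⟨[Sum.inl {i}], Or.inl rfl, h2⟩
    | cons j r =>
      simp only [buildLk, List.cons.injEq, Sum.inl.injEq] at hb
      obtain ⟨h1, h2⟩ := hb
      have hic : i = c := Set.singleton_eq_singleton_iff.mp h1.symm
      subst hic
      exact ⟨buildLk j i r, Or.inr ⟨j, r, (List.isChain_cons_cons.mp hch).1.symm, hch.tail, rfl⟩, h2⟩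
  · rintro ⟨y, hy, rfl⟩
    rcases hy with rfl | ⟨j, rest, hjc, hch, rfl⟩
    · exact ⟨c, [], hc, List.isChain_singleton c, rfl⟩
    · exact ⟨c, j :: rest, hc, List.isChain_cons_cons.mpr ⟨hjc.symm, hch⟩, rfl⟩

lemma dl_E_atom (k : ℕ) (c j : Fin k) (hjc : j ≠ c) :
    dl (lkE k c) [Sum.inl {j}] = { w | ∃ y ∈ lkE k j, w = Sum.inr c :: y } := by
  ext x
  simp only [dl, lkE, Set.mem_setOf_eq, List.cons_append, List.nil_append]
  constructor
  · rintro (h | ⟨j', rest, hj'c, hch, hb⟩)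
    · simp only [List.cons.injEq, Sum.inl.injEq] at h
      exact absurd (Set.singleton_eq_singleton_iff.mp h.1) hjc
    · cases rest with
      | nil =>
        simp only [buildLk, List.cons.injEq, Sum.inl.injEq] at hb
        obtain ⟨h1, h2⟩ := hb
        obtain rfl : j' = j := Set.singleton_eq_singleton_iff.mp h1.symm
        exact ⟨[Sum.inl {j'}], Or.inl rfl, h2⟩
      | cons j'' r =>
        simp only [buildLk, List.cons.injEq, Sum.inl.injEq] at hb
        obtain ⟨h1, h2⟩ := hb
        obtain rfl : j' = j := Set.singleton_eq_singleton_iff.mp h1.symm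
        exact ⟨buildLk j'' j' r, Or.inr ⟨j'', r, (List.isChain_cons_cons.mp hch).1.symm, hch.tail, rfl⟩, h2⟩
  · rintro ⟨y, hy, rfl⟩
    rcases hy with rfl | ⟨j'', rest, hne, hch, rfl⟩
    · exact Or.inr ⟨j, [], hjc, List.isChain_singleton j, rfl⟩
    · exact Or.inr ⟨j, j'' :: rest, hjc, List.isChain_cons_cons.mpr ⟨hne.symm, hch⟩, rfl⟩

open Classical in
lemma lkδ_post_inl (k : ℕ) (hk : 0 < k) (c : Fin k) (α : Set (Fin k)) :
    lkδ k hk (.post c) (Sum.inl α) =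
      if α = ({c} : Set (Fin k)) then LkSt.done
      else if h : ∃ j : Fin k, j ≠ c ∧ α = {j} then .mid c h.choose else .dead := rfl

lemma lk_step (k : ℕ) (hk : 0 < k) (s : LkSt k) (σ : Set (Fin k) ⊕ Fin k) :
    dl (lkDen k hk s) [σ] = lkDen k hk (lkδ k hk s σ) := by
  cases s with
  | start =>
    cases σ with
    | inl α =>
      by_cases h : ∃ c : Fin k, c ≠ ⟨0, hk⟩ ∧ α = {c}
      · rw [show lkδ k hk .start (Sum.inl α) = .mid ⟨0, hk⟩ h.choose from dif_pos h]
        have hc := h.choose_spec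
        generalize hg : h.choose = c0 at *
        rw [hc.2]
        exact dl_L_atom k hk _ hc.1
      · rw [show lkδ k hk .start (Sum.inl α) = .dead from dif_neg h]
        ext x
        simp only [lkDen, dl, Set.mem_setOf_eq, List.cons_append, List.nil_append,
          Set.mem_empty_iff_false, iff_false]
        rintro ⟨i, rest, hi, hch, hb⟩
        obtain ⟨t, ht⟩ := buildLk_cons i ⟨0, hk⟩ rest
        rw [ht] at hb
        simp only [List.cons.injEq, Sum.inl.injEq] at hb
        exact h ⟨i, hi, hb.1⟩
    | inr p =>
      show dl (Lk k hk) _ = (∅ : Set _)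
      ext x
      simp only [dl, Set.mem_setOf_eq, List.cons_append, List.nil_append,
        Set.mem_empty_iff_false, iff_false]
      rintro ⟨i, rest, hi, hch, hb⟩
      obtain ⟨t, ht⟩ := buildLk_cons i ⟨0, hk⟩ rest
      rw [ht] at hb
      simp at hb
  | dead =>
    show dl (∅ : Set _) _ = (∅ : Set _)
    ext x; simp [dl]
  | done =>
    show dl ({[]} : Set (GList (Fin k) (Fin k))) _ = (∅ : Set _)
    ext x; simp [dl]
  | mid b c =>
    cases σ with
    | inl α =>
      show dl _ _ = (∅ : Set _)
      ext x
      simp only [lkDen, dl, Set.mem_setOf_eq, List.cons_append, List.nil_append,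
        Set.mem_empty_iff_false, iff_false]
      rintro ⟨y, hy, heq⟩
      simp at heq
    | inr p =>
      rcases eq_or_ne p b with rfl | hpb
      · rw [show lkδ k hk (.mid p c) (Sum.inr p) = .post c from if_pos rfl]
        ext x
        simp only [lkDen, dl, Set.mem_setOf_eq, List.cons_append, List.nil_append]
        constructor
        · rintro ⟨y, hy, heq⟩
          simp only [List.cons.injEq] at heq
          rw [heq.2]; exact hy
        · intro hx; exact ⟨x, hx, rfl⟩
      · rw [show lkδ k hk (.mid b c) (Sum.inr p) = .dead from if_neg hpb]
        ext x
        simp only [lkDen, dl, Set.mem_setOf_eq, List.cons_append, List.nil_append,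
          Set.mem_empty_iff_false, iff_false]
        rintro ⟨y, hy, heq⟩
        simp only [List.cons.injEq, Sum.inr.injEq] at heq
        exact hpb heq.1
  | post c =>
    cases σ with
    | inl α =>
      rcases eq_or_ne α ({c} : Set (Fin k)) with rfl | hac
      · rw [show lkδ k hk (.post c) (Sum.inl {c}) = .done from if_pos rfl]
        ext x
        simp only [lkDen, lkE, dl, Set.mem_setOf_eq, List.cons_append, List.nil_append,
          Set.mem_singleton_iff]
        constructor
        · rintro (h | ⟨j, rest, hjc, hch, hb⟩)
          · simpa using h
          · obtain ⟨t, ht⟩ := buildLk_cons j c rest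
            rw [ht] at hb
            simp only [List.cons.injEq, Sum.inl.injEq] at hb
            exact absurd (Set.singleton_eq_singleton_iff.mp hb.1) hjc.symm
        · rintro rfl
          exact Or.inl rfl
      · by_cases h : ∃ j : Fin k, j ≠ c ∧ α = {j}
        · rw [lkδ_post_inl, if_neg hac, dif_pos h]
          have hj := h.choose_spec
          generalize hg : h.choose = j0 at *
          rw [hj.2]
          exact dl_E_atom k c _ hj.1
        · rw [lkδ_post_inl, if_neg hac, dif_neg h]
          ext x
          simp only [lkDen, lkE, dl, Set.mem_setOf_eq, List.cons_append, List.nil_append,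
            Set.mem_empty_iff_false, iff_false]
          rintro (heq | ⟨j, rest, hjc, hch, hb⟩)
          · simp only [List.cons.injEq, Sum.inl.injEq] at heq
            exact hac heq.1
          · obtain ⟨t, ht⟩ := buildLk_cons j c rest
            rw [ht] at hb
            simp only [List.cons.injEq, Sum.inl.injEq] at hb
            exact h ⟨j, hjc, hb.1⟩
    | inr p =>
      show dl _ _ = (∅ : Set _)
      ext x
      simp only [lkDen, lkE, dl, Set.mem_setOf_eq, List.cons_append, List.nil_append,
        Set.mem_empty_iff_false, iff_false]
      rintro (heq | ⟨j, rest, hjc, hch, hb⟩)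
      · simp at heq
      · obtain ⟨t, ht⟩ := buildLk_cons j c rest
        rw [ht] at hb
        simp at hb

lemma lk_foldl (k : ℕ) (hk : 0 < k) :
    ∀ (u : GList (Fin k) (Fin k)) (s : LkSt k),
      dl (lkDen k hk s) u = lkDen k hk (List.foldl (lkδ k hk) s u) := by
  intro u
  induction u with
  | nil => intro s; ext x; simp [dl]
  | cons σ u ih =>
    intro s
    have h1 : dl (lkDen k hk s) (σ :: u) = dl (dl (lkDen k hk s) [σ]) u := by
      ext x; simp [dl]
    rw [h1, lk_step, List.foldl_cons, ih]

end Reg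

/-- L_k is a deterministic regular guarded language. -/
theorem Lk_det_regular (k : ℕ) (hk : 0 < k) :
    DetLang (Lk k hk) ∧ (∀ w ∈ Lk k hk, IsGuarded w) ∧
      (Set.range (dl (Lk k hk))).Finite := by
  refine ⟨?_, ?_, ?_⟩
  · rintro w ⟨i, rest, hi, hch, rfl⟩ x ⟨i', rest', hi', hch', rfl⟩ hne
    have h : i ≠ i' ∨ rest ≠ rest' := by
      by_contra hcon
      push_neg at hcon
      exact hne (by rw [hcon.1, hcon.2])
    exact buildLk_diff rest rest' i i' ⟨0, hk⟩ hch hch' h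
  · rintro w ⟨i, rest, hi, hch, rfl⟩
    exact buildLk_guarded rest i ⟨0, hk⟩
  · have hL : Lk k hk = lkDen k hk .start := rfl
    have hsub : Set.range (dl (Lk k hk)) ⊆ Set.range (lkDen k hk) := by
      rintro _ ⟨u, rfl⟩
      rw [hL, lk_foldl]
      exact ⟨_, rfl⟩
    exact (Set.finite_range (lkDen k hk)).subset hsub
end

section
/- The deterministic fragment of Kleene algebra without tests is generated by sequential composition together with the constants true and false: every KA expression e whose guarded language L(e) is deterministic is language-equivalent to either false (empty language), true (the language At), or a finite product p₁·p₂·...·p_n of atomic actions. Equivalently, if the regular language over Σ of a regular expression e contains two distinct strings, then its guarded language L(e) is not deterministic. -/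
/-!
A test-free expression cannot tell atoms apart, so its guarded language is a union of
guarded languages of words: membership depends only on guardedness and the action sequence.
If two members have different action sequences, replace every atom in both by `∅`; the two
resulting strings still lie in the language and are distinct, but can only first differ at an
action or by one being a prefix of the other, which determinism forbids.
-/

variable {A T : Type}

@[simp] lemma actsOf_nil : actsOf ([] : GList A T) = [] := rfl

@[simp] lemma actsOf_inl_cons (α : Set T) (w : GList A T) :
    actsOf (Sum.inl α :: w) = actsOf w := rfl

@[simp] lemma actsOf_inr_cons (p : A) (w : GList A T) :
    actsOf (Sum.inr p :: w) = p :: actsOf w := rfl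

@[simp] lemma actsOf_append (u v : GList A T) : actsOf (u ++ v) = actsOf u ++ actsOf v :=
  List.filterMap_append

lemma actsOf_map_atoms (f : Set T → Set T) (w : GList A T) :
    actsOf (w.map (Sum.map f id)) = actsOf w := by
  induction w with
  | nil => rfl
  | cons z w ih => cases z <;> simp [ih]

lemma eq_of_inl_mem_map_const {α γ : Set T} {w : GList A T}
    (h : Sum.inl α ∈ w.map (Sum.map (fun _ => γ) id)) : α = γ := by
  obtain ⟨_ | _, -, hz⟩ := List.mem_map.1 h <;> simp_all

lemma IsGuarded.map_atoms (f : Set T → Set T) {w : GList A T} (hw : IsGuarded w) :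
    IsGuarded (w.map (Sum.map f id)) := by
  induction hw with
  | single α => exact .single (f α)
  | cons α p _ ih => exact .cons (f α) p ih

lemma IsGuarded.append_cons {y : GList A T} (hy : IsGuarded y) {u v : GList A T} {α : Set T}
    (hu : y = u ++ [Sum.inl α]) (hv : IsGuarded (Sum.inl α :: v)) :
    IsGuarded (u ++ Sum.inl α :: v) := by
  induction hy generalizing u with
  | single β =>
    obtain ⟨rfl, rfl⟩ : u = [] ∧ β = α := by
      rcases u with _ | ⟨_, _ | _⟩ <;> simp_all
    exact hv
  | cons β p _ ih =>
    match u, hu with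
    | z₁ :: z₂ :: u', hu =>
      simp only [List.cons_append, List.cons.injEq] at hu
      obtain ⟨rfl, rfl, hu⟩ := hu
      exact .cons β p (ih hu)

lemma wordLang_nil : wordLang ([] : List A) = (atomsLang : Set (GList A T)) := by
  ext x
  constructor
  · rintro ⟨hx | hx, hacts⟩
    · exact ⟨_, rfl⟩
    · simp at hacts
  · rintro ⟨α, rfl⟩
    exact ⟨.single α, rfl⟩

lemma wordLang_singleton (p : A) :
    (wordLang [p] : Set (GList A T)) =
      { w | ∃ α β : Set T, w = [Sum.inl α, Sum.inr p, Sum.inl β] } := by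
  ext x
  constructor
  · rintro ⟨hx, hacts⟩
    cases hx with
    | single => simp at hacts
    | @cons α q l hl =>
      simp only [actsOf_inl_cons, actsOf_inr_cons, List.cons.injEq] at hacts
      obtain ⟨rfl, hacts⟩ := hacts
      obtain ⟨β, rfl⟩ : l ∈ (atomsLang : Set (GList A T)) := by
        rw [← wordLang_nil]; exact ⟨hl, hacts⟩
      exact ⟨α, β, rfl⟩
  · rintro ⟨α, β, rfl⟩
    exact ⟨.cons α p (.single β), rfl⟩

lemma IsGuarded.exists_split {x : GList A T} (hx : IsGuarded x) {ps qs : List A}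
    (hacts : actsOf x = ps ++ qs) :
    ∃ (u : GList A T) (γ : Set T) (v : GList A T), x = u ++ Sum.inl γ :: v ∧
      u ++ [Sum.inl γ] ∈ wordLang ps ∧ Sum.inl γ :: v ∈ wordLang qs := by
  induction ps generalizing x with
  | nil =>
    obtain ⟨γ, v, rfl⟩ : ∃ γ v, x = Sum.inl γ :: v := by
      cases hx with
      | single γ => exact ⟨γ, [], rfl⟩
      | cons γ _ _ => exact ⟨γ, _, rfl⟩
    exact ⟨[], γ, v, rfl, ⟨.single γ, rfl⟩, hx, by simpa using hacts⟩
  | cons p ps ih =>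
    cases hx with
    | single β => simp at hacts
    | cons α q hl =>
      simp only [actsOf_inl_cons, actsOf_inr_cons, List.cons_append, List.cons.injEq] at hacts
      obtain ⟨rfl, hacts⟩ := hacts
      obtain ⟨u, γ, v, rfl, ⟨hgu, hu⟩, hv⟩ := ih hl hacts
      exact ⟨Sum.inl α :: Sum.inr q :: u, γ, v, rfl, ⟨.cons α q hgu, by simpa using hu⟩, hv⟩

/-- Equivalently, `L` is a union of languages `wordLang ps`. -/
def IsWordUnion (L : Set (GList A T)) : Prop :=
  ∀ w ∈ L, IsGuarded w ∧ wordLang (actsOf w) ⊆ L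

lemma isWordUnion_wordLang (ps : List A) : IsWordUnion (wordLang ps : Set (GList A T)) := by
  rintro w ⟨hw, rfl⟩
  exact ⟨hw, subset_rfl⟩

namespace IsWordUnion

lemma union {L K : Set (GList A T)} (hL : IsWordUnion L) (hK : IsWordUnion K) :
    IsWordUnion (L ∪ K) := by
  rintro w (hw | hw)
  · exact ⟨(hL w hw).1, (hL w hw).2.trans Set.subset_union_left⟩
  · exact ⟨(hK w hw).1, (hK w hw).2.trans Set.subset_union_right⟩

lemma iUnion {L : ℕ → Set (GList A T)} (hL : ∀ n, IsWordUnion (L n)) :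
    IsWordUnion (⋃ n, L n) := by
  intro w hw
  obtain ⟨n, hw⟩ := Set.mem_iUnion.1 hw
  exact ⟨(hL n w hw).1, (hL n w hw).2.trans (Set.subset_iUnion L n)⟩

lemma gcomp {L K : Set (GList A T)} (hL : IsWordUnion L) (hK : IsWordUnion K) :
    IsWordUnion (gcomp L K) := by
  rintro _ ⟨u, α, v, hu, hv, rfl⟩
  refine ⟨(hL _ hu).1.append_cons rfl (hK _ hv).1, fun x ⟨hx, hacts⟩ => ?_⟩
  obtain ⟨u', γ, v', rfl, hu', hv'⟩ :=
    hx.exists_split (ps := actsOf (u ++ [Sum.inl α])) (qs := actsOf (Sum.inl α :: v))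
      (by simpa using hacts)
  exact ⟨u', γ, v', (hL _ hu).2 hu', (hK _ hv).2 hv', rfl⟩

lemma gstar {L : Set (GList A T)} (hL : IsWordUnion L) : IsWordUnion (gstar L) := by
  refine iUnion fun n => ?_
  induction n with
  | zero => simpa only [gpow, ← wordLang_nil] using isWordUnion_wordLang (A := A) (T := T) []
  | succ n ih => exact hL.gcomp ih

end IsWordUnion

lemma BExp.holds_iff_of_varFree {b : BExp T} (hb : b.varFree) (α β : Set T) :
    b.holds α ↔ b.holds β := by
  induction b with
  | tru | fls => simp [BExp.holds]
  | var t => exact hb.elim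
  | or b c ihb ihc => exact or_congr (ihb hb.1) (ihc hb.2)
  | and b c ihb ihc => exact and_congr (ihb hb.1) (ihc hb.2)
  | not b ihb => exact not_congr (ihb hb)

lemma isWordUnion_testLang {b : BExp T} (hb : b.varFree) :
    IsWordUnion (testLang b : Set (GList A T)) := by
  rintro _ ⟨α, hα, rfl⟩
  refine ⟨.single α, fun x hx => ?_⟩
  obtain ⟨β, rfl⟩ : x ∈ (atomsLang : Set (GList A T)) := wordLang_nil (A := A) ▸ hx
  exact ⟨β, (BExp.holds_iff_of_varFree hb β α).2 hα, rfl⟩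

lemma KExp.isWordUnion_lang {e : KExp A T} (he : e.testFree) : IsWordUnion (lang e) := by
  induction e with
  | test b => exact isWordUnion_testLang he
  | act p => simpa only [lang, ← wordLang_singleton] using isWordUnion_wordLang [p]
  | plus e f ihe ihf => exact (ihe he.1).union (ihf he.2)
  | seq e f ihe ihf => exact (ihe he.1).gcomp (ihf he.2)
  | star e ih => exact (ih he).gstar

namespace IsWordUnion

lemma actsOf_eq_of_detLang {L : Set (GList A T)} (hL : IsWordUnion L) (hdet : DetLang L)
    {w x : GList A T} (hw : w ∈ L) (hx : x ∈ L) : actsOf w = actsOf x := by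
  let erase : GList A T → GList A T := List.map (Sum.map (fun _ => ∅) id)
  have herase_mem : ∀ y ∈ L, erase y ∈ L := fun y hy =>
    (hL y hy).2 ⟨(hL y hy).1.map_atoms _, actsOf_map_atoms _ y⟩
  by_contra hne
  obtain ⟨l, w', x', α, β, hαβ, hw', hx'⟩ :=
    hdet _ (herase_mem w hw) _ (herase_mem x hx) fun h => hne <| by
      simpa only [erase, actsOf_map_atoms] using congrArg actsOf h
  have hα := eq_of_inl_mem_map_const (hw' ▸ List.mem_append_right l List.mem_cons_self)
  have hβ := eq_of_inl_mem_map_const (hx' ▸ List.mem_append_right l List.mem_cons_self)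
  exact hαβ (hα.trans hβ.symm)

lemma eq_empty_or_eq_wordLang_of_detLang {L : Set (GList A T)} (hL : IsWordUnion L)
    (hdet : DetLang L) : L = ∅ ∨ ∃ ps : List A, L = wordLang ps := by
  rcases L.eq_empty_or_nonempty with hemp | ⟨w, hw⟩
  · exact .inl hemp
  refine .inr ⟨actsOf w, Set.Subset.antisymm (fun x hx => ⟨(hL x hx).1, ?_⟩) ((hL w hw).2)⟩
  exact hL.actsOf_eq_of_detLang hdet hx hw

end IsWordUnion

/-- the deterministic fragment of Kleene algebra without tests is generated
by sequential composition, true and false; equivalently, a test-free expression whose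
language contains two strings with different action sequences is not deterministic. -/
theorem ka_det_generated {A T : Type} (e : KExp A T) (he : e.testFree) :
    (DetLang (lang e) → lang e = ∅ ∨ ∃ ps : List A, lang e = wordLang ps) ∧
    (∀ w ∈ lang e, ∀ x ∈ lang e, actsOf w ≠ actsOf x → ¬ DetLang (lang e)) := by
  have hL := KExp.isWordUnion_lang he
  exact ⟨hL.eq_empty_or_eq_wordLang_of_detLang,
    fun w hw x hx hne hdet => hne (hL.actsOf_eq_of_detLang hdet hw hx)⟩
end
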